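/- Let h, b ∈ ℂ((z)) with h' ≠ 0 and 𝔳(h) < 0, c ∈ ℂ, and ρ = ρ_{(h,c,b)}. Let U ⊆ ℂ((z)) be a nonzero ℂ-subspace with ρ(L_{−1})(U) ⊆ U and ρ(L_0)(U) ⊆ U. Then: (i) for every f ∈ A_U, both f'/h' and h·f'/h' belong to A_U; (ii) if moreover A_U ≠ ℂ, then there exist f₁, f₂ ∈ A_U with f₂ ≠ 0 and h·f₂ = f₁, and there exist g₁, g₂ ∈ A_U with g₂ ≠ 0 and h^{−1}·g₂ = g₁; in other words, both h and h^{−1} lie in the field of fractions of A_U taken inside ℂ((z)). -/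

import Mathlib

set_option maxHeartbeats 1000000
set_option synthInstance.maxHeartbeats 1000000

noncomputable section

open Polynomial

/-- `K` is the field of formal Laurent series `ℂ((z))`. -/
abbrev K : Type := LaurentSeries ℂ

/-- The formal (termwise) derivative on `ℂ((z))`, as a `ℂ`-linear map. -/
def D : K →ₗ[ℂ] K where
  toFun f :=
    { coeff := fun n => ((n + 1 : ℤ) : ℂ) * f.coeff (n + 1)
      isPWO_support' := by
        have hsub : (Function.support fun n : ℤ => ((n + 1 : ℤ) : ℂ) * f.coeff (n + 1)) ⊆
            (fun m : ℤ => m - 1) '' (Function.support f.coeff) := by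
          intro n hn
          refine ⟨n + 1, fun h0 => hn (by simp [h0]), by ring⟩
        exact ((f.isPWO_support'.image_of_monotone
          (f := fun m : ℤ => m - 1) (fun a b hab => by dsimp only; omega))).mono hsub }
  map_add' f g := by
    ext n
    show ((n + 1 : ℤ) : ℂ) * (f + g).coeff (n + 1) = _
    simp [HahnSeries.coeff_add, mul_add]
  map_smul' c f := by
    ext n
    show ((n + 1 : ℤ) : ℂ) * (c • f).coeff (n + 1) = _
    simp only [HahnSeries.coeff_smul, RingHom.id_apply, smul_eq_mul]
    ring

instance : SMulCommClass ℂ K K where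
  smul_comm c x y := by
    simp only [smul_eq_mul]
    rw [← HahnSeries.C_mul_eq_smul, ← HahnSeries.C_mul_eq_smul]; ring

instance : IsScalarTower ℂ K K where
  smul_assoc c x y := by
    simp only [smul_eq_mul]
    rw [← HahnSeries.C_mul_eq_smul, ← HahnSeries.C_mul_eq_smul]; ring

/-- The first-order differential operator `ψ ↦ a·ψ' + m·ψ`. -/
def fdOp (a m : K) : Module.End ℂ K :=
  (LinearMap.mulLeft ℂ a).comp (D : K →ₗ[ℂ] K) + LinearMap.mulLeft ℂ m

/-- A `ℂ`-linear endomorphism of `ℂ((z))` is a first-order differential operator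
if it has the form `ψ ↦ a·ψ' + m·ψ` for some `a, m ∈ ℂ((z))`. -/
def IsFDO (P : Module.End ℂ K) : Prop := ∃ a m : K, P = fdOp a m

/-- The symbol `−h^(k+1)/h'` of `ρ_{(h,c,b)}(L_k)`. -/
def wittA (h : K) (k : ℤ) : K := -(h ^ (k + 1)) / D h

/-- The zeroth-order coefficient `−(k+1)·c·h^k + (h^(k+1)/h')·b` of `ρ_{(h,c,b)}(L_k)`. -/
def wittM (h : K) (c : ℂ) (b : K) (k : ℤ) : K :=
  (-(((k : ℂ) + 1) * c)) • h ^ k + (h ^ (k + 1) / D h) * b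

/-- The Witt family `ρ_{(h,c,b)}(L_k) : f ↦ −(h^{k+1}/h')·f' + (−(k+1)·c·h^k + (h^{k+1}/h')·b)·f`. -/
def wittOp (h : K) (c : ℂ) (b : K) (k : ℤ) : Module.End ℂ K :=
  fdOp (wittA h k) (wittM h c b k)

/-- The Laurent series `z`. -/
def zK : K := HahnSeries.single (1 : ℤ) (1 : ℂ)

/-- The residue: the coefficient of `z⁻¹`. -/
def Res (f : K) : ℂ := f.coeff (-1)

/-- The Gelfand–Fuchs cocycle, on the data `(a᷀1, m₁), (a₂, m₂)` of two first-order
differential operators `P_i : f ↦ a_i·f' + m_i·f`. -/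
def GF (a₁ m₁ a₂ m₂ : K) : ℂ :=
  (1/6 : ℂ) * Res (D (D a₁) * D a₂) + (1/2 : ℂ) * Res (D a₁ * D m₂)
    + (1/2 : ℂ) * Res (D (D m₁) * a₂) + Res (D m₁ * m₂)

/-- The Schwarzian derivative `S(h) = h'''/h' − (3/2)·(h''/h')²`. -/
def Sch (h : K) : K := D (D (D h)) / D h - (3/2 : ℂ) • (D (D h) / D h) ^ 2

/-- `ℂ[[z]]` as a `ℂ`-subspace of `ℂ((z))`. -/
def PS : Submodule ℂ K where
  carrier := {f : K | ∀ n : ℤ, n < 0 → f.coeff n = 0}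
  add_mem' := fun hf hg n hn => by simp [HahnSeries.coeff_add, hf n hn, hg n hn]
  zero_mem' := fun n _ => rfl
  smul_mem' := fun c f hf n hn => by simp [HahnSeries.coeff_smul, hf n hn]

lemma D_coeff (f : K) (n : ℤ) :
    (D f).coeff n = ((n + 1 : ℤ) : ℂ) * f.coeff (n + 1) := rfl

lemma D_support_sub (f : K) :
    (D f).support ⊆ (fun m : ℤ => m - 1) '' f.support := by
  intro i hi
  rw [HahnSeries.mem_support, D_coeff] at hi
  exact ⟨i + 1, fun h0 => hi (by rw [h0, mul_zero]), by ring⟩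

lemma shift_isPWO (f : K) : ((fun m : ℤ => m - 1) '' f.support).IsPWO :=
  f.isPWO_support.image_of_monotone (fun a b hab => sub_le_sub_right hab 1)

lemma D_mul (f g : K) : D (f * g) = D f * g + f * D g := by
  ext n
  rw [HahnSeries.coeff_add, D_coeff]
  have hDfg : (D f * g).coeff n =
      ∑ ij ∈ Finset.antidiagonal f.isPWO_support g.isPWO_support (n + 1),
        ((ij.1 : ℤ) : ℂ) * f.coeff ij.1 * g.coeff ij.2 := by
    rw [HahnSeries.coeff_mul_left' (shift_isPWO f) (D_support_sub f)]
    refine Finset.sum_nbij' (fun ij => (ij.1 + 1, ij.2)) (fun ij => (ij.1 - 1, ij.2))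
      ?_ ?_ ?_ ?_ ?_
    · rintro ⟨i, j⟩ hij
      dsimp only
      rw [Finset.mem_antidiagonal] at hij ⊢
      obtain ⟨⟨i', hi', hi''⟩, hj, hsum⟩ := hij
      dsimp only at hi''
      refine ⟨by rw [show i + 1 = i' by omega]; exact hi', hj, by omega⟩
    · rintro ⟨i, j⟩ hij
      dsimp only
      rw [Finset.mem_antidiagonal] at hij ⊢
      obtain ⟨hi, hj, hsum⟩ := hij
      exact ⟨⟨i, hi, rfl⟩, hj, by omega⟩
    · rintro ⟨i, j⟩ _; simp
    · rintro ⟨i, j⟩ _; simp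
    · rintro ⟨i, j⟩ _
      rw [D_coeff]
  have hfDg : (f * D g).coeff n =
      ∑ ij ∈ Finset.antidiagonal f.isPWO_support g.isPWO_support (n + 1),
        f.coeff ij.1 * (((ij.2 : ℤ) : ℂ) * g.coeff ij.2) := by
    rw [HahnSeries.coeff_mul_right' (shift_isPWO g) (D_support_sub g)]
    refine Finset.sum_nbij' (fun ij => (ij.1, ij.2 + 1)) (fun ij => (ij.1, ij.2 - 1))
      ?_ ?_ ?_ ?_ ?_
    · rintro ⟨i, j⟩ hij
      dsimp only
      rw [Finset.mem_antidiagonal] at hij ⊢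
      obtain ⟨hi, ⟨j', hj', hj''⟩, hsum⟩ := hij
      dsimp only at hj''
      refine ⟨hi, by rw [show j + 1 = j' by omega]; exact hj', by omega⟩
    · rintro ⟨i, j⟩ hij
      dsimp only
      rw [Finset.mem_antidiagonal] at hij ⊢
      obtain ⟨hi, hj, hsum⟩ := hij
      exact ⟨hi, ⟨j, hj, rfl⟩, by omega⟩
    · rintro ⟨i, j⟩ _; simp
    · rintro ⟨i, j⟩ _; simp
    · rintro ⟨i, j⟩ _
      rw [D_coeff]
  rw [hDfg, hfDg, HahnSeries.coeff_mul, Finset.mul_sum, ← Finset.sum_add_distrib]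
  refine Finset.sum_congr rfl ?_
  rintro ⟨i, j⟩ hij
  rw [Finset.mem_antidiagonal] at hij
  obtain ⟨_, _, hsum⟩ := hij
  dsimp only at hsum ⊢
  rw [← hsum]
  push_cast
  ring

lemma fdOp_apply (a m u : K) : fdOp a m u = a * D u + m * u := by
  simp [fdOp, LinearMap.mulLeft_apply]

lemma const_of_D_eq_zero (f : K) (hD : D f = 0) :
    f ∈ Set.range (fun a : ℂ => algebraMap ℂ K a) := by
  refine ⟨f.coeff 0, ?_⟩
  ext n
  have h := congrArg (fun x : K => x.coeff (n - 1)) hD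
  simp only [D_coeff, HahnSeries.coeff_zero] at h
  rw [show n - 1 + 1 = n by ring] at h
  show (algebraMap ℂ K (f.coeff 0)).coeff n = f.coeff n
  rw [show (algebraMap ℂ K (f.coeff 0)) = HahnSeries.single (0 : ℤ) (f.coeff 0) by
    rw [HahnSeries.algebraMap_apply',
      show (algebraMap ℂ (PowerSeries ℂ)) (f.coeff 0) = PowerSeries.C (f.coeff 0) from rfl,
      HahnSeries.ofPowerSeries_C, HahnSeries.C_apply]]
  rcases eq_or_ne n 0 with hn | hn
  · subst hn; simp
  · rw [HahnSeries.coeff_single_of_ne hn]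
    exact ((mul_eq_zero.mp h).resolve_left (by exact_mod_cast hn)).symm

lemma wittA_neg_one (h : K) : wittA h (-1) = -1 / D h := by
  simp [wittA]

lemma wittA_zero (h : K) : wittA h 0 = -h / D h := by
  simp [wittA]

lemma commutator_mem (h b : K) (c : ℂ) (k : ℤ)
    (U : Submodule ℂ K)
    (hk : ∀ u ∈ U, wittOp h c b k u ∈ U)
    (f : K) (hf : ∀ u ∈ U, f * u ∈ U) :
    ∀ u ∈ U, wittA h k * D f * u ∈ U := by
  intro u hu
  have key : wittA h k * D f * u =
      wittOp h c b k (f * u) - f * wittOp h c b k u := by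
    simp only [wittOp, fdOp_apply, D_mul]
    ring
  rw [key]
  exact U.sub_mem (hk _ (hf u hu)) (hf _ (hk u hu))

/-- for `U` nonzero and stable under `ρ(L_{-1})` and `ρ(L_0)`:
(i) `f ∈ A_U` implies `f'/h' ∈ A_U` and `h·f'/h' ∈ A_U`; (ii) if `A_U ≠ ℂ` then both `h`
and `h⁻¹` lie in the field of fractions of `A_U` inside `ℂ((z))`. -/
theorem statement14 (h b : K) (hh : D h ≠ 0) (hord : h.order < 0) (c : ℂ)
    (U : Submodule ℂ K) (hU0 : U ≠ ⊥)
    (hm1 : ∀ u ∈ U, wittOp h c b (-1) u ∈ U)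
    (h0 : ∀ u ∈ U, wittOp h c b 0 u ∈ U) :
    (∀ f : K, (∀ u ∈ U, f * u ∈ U) →
      (∀ u ∈ U, D f / D h * u ∈ U) ∧ (∀ u ∈ U, h * (D f / D h) * u ∈ U))
    ∧
    ((∃ f : K, (∀ u ∈ U, f * u ∈ U) ∧ f ∉ Set.range (fun a : ℂ => algebraMap ℂ K a)) →
      (∃ f₁ f₂ : K, (∀ u ∈ U, f₁ * u ∈ U) ∧ (∀ u ∈ U, f₂ * u ∈ U) ∧ f₂ ≠ 0 ∧
        h * f₂ = f₁) ∧
      (∃ g₁ g₂ : K, (∀ u ∈ U, g₁ * u ∈ U) ∧ (∀ u ∈ U, g₂ * u ∈ U) ∧ g₂ ≠ 0 ∧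
        h⁻¹ * g₂ = g₁)) := by
  have part1 : ∀ f : K, (∀ u ∈ U, f * u ∈ U) →
      (∀ u ∈ U, D f / D h * u ∈ U) ∧ (∀ u ∈ U, h * (D f / D h) * u ∈ U) := by
    intro f hf
    constructor
    · intro u hu
      have hmem := commutator_mem h b c (-1) U hm1 f hf u hu
      have : D f / D h * u = -(wittA h (-1) * D f * u) := by
        rw [wittA_neg_one]; ring
      rw [this]
      exact U.neg_mem hmem
    · intro u hu
      have hmem := commutator_mem h b c 0 U h0 f hf u hu
      have : h * (D f / D h) * u = -(wittA h 0 * D f * u) := by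
        rw [wittA_zero]; ring
      rw [this]
      exact U.neg_mem hmem
  refine ⟨part1, ?_⟩
  rintro ⟨f, hf, hfc⟩
  have hDf : D f ≠ 0 := fun hD => hfc (const_of_D_eq_zero f hD)
  have hne : h ≠ 0 := by
    intro h0
    rw [h0, HahnSeries.order_zero] at hord
    exact lt_irrefl 0 hord
  have hf2 : D f / D h ≠ 0 := div_ne_zero hDf hh
  obtain ⟨hA, hB⟩ := part1 f hf
  constructor
  · exact ⟨h * (D f / D h), D f / D h, hB, hA, hf2, rfl⟩
  · refine ⟨D f / D h, h * (D f / D h), hA, hB, mul_ne_zero hne hf2, ?_⟩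
    rw [← mul_assoc, inv_mul_cancel₀ hne, one_mul]

end
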